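/- arXiv:2509.22260 — 3 statements merged into one kernel-verified Lean document; each statement's English description precedes it below -/
import Mathlib

section
/- (Sharp discrete Wulff bound for the axis stencil) For every finite nonempty Y ⊂ Z^d, the directed edge perimeter satisfies Per_{S_ax,1}(Y) ≥ 2d · |Y|^{(d-1)/d}. -/
set_option maxHeartbeats 1000000


open Finset

/-- The directed edge perimeter of a finite set `Y ⊂ ℤ^d` with respect to the axis
stencil `S_ax = {±e₁,…,±e_d}`. -/
def axisPer (d : ℕ) (Y : Finset (Fin d → ℤ)) : ℕ :=
  ∑ i : Fin d,
    ((Y.filter fun y => y + Pi.single i 1 ∉ Y).card +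
      (Y.filter fun y => y - Pi.single i 1 ∉ Y).card)

theorem holder_pow {ι κ : Type*} (s : Finset ι) (t : Finset κ) (f : ι → κ → ℝ)
    (hf : ∀ i ∈ s, ∀ x ∈ t, 0 ≤ f i x) :
    (∑ x ∈ t, ∏ i ∈ s, f i x) ^ s.card ≤ ∏ i ∈ s, ∑ x ∈ t, f i x ^ s.card := by
  set m := s.card with hm
  rcases Nat.eq_zero_or_pos m with h0 | hpos
  · rw [card_eq_zero] at h0; subst h0; simp at hm; simp [hm]
  have hmR : (0:ℝ) < m := by exact_mod_cast hpos
  set A : ι → ℝ := fun i => ∑ x ∈ t, f i x ^ m with hA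
  have hAnn : ∀ i ∈ s, 0 ≤ A i := fun i hi =>
    Finset.sum_nonneg fun x hx => pow_nonneg (hf i hi x hx) m
  by_cases hz : ∃ i ∈ s, A i = 0
  · obtain ⟨i0, hi0, hAi0⟩ := hz
    have hf0 : ∀ x ∈ t, f i0 x = 0 := by
      intro x hx
      have := (Finset.sum_eq_zero_iff_of_nonneg
        (fun x hx => pow_nonneg (hf i0 hi0 x hx) m)).1 hAi0 x hx
      exact pow_eq_zero_iff (by omega) |>.1 this
    have : (∑ x ∈ t, ∏ i ∈ s, f i x) = 0 := by
      apply Finset.sum_eq_zero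
      intro x hx
      exact Finset.prod_eq_zero hi0 (hf0 x hx)
    rw [this, zero_pow (by omega)]
    exact Finset.prod_nonneg hAnn
  · push_neg at hz
    have hApos : ∀ i ∈ s, 0 < A i := fun i hi => lt_of_le_of_ne (hAnn i hi) (Ne.symm (hz i hi))
    have hPpos : 0 < ∏ i ∈ s, A i ^ ((1:ℝ)/m) := by
      apply Finset.prod_pos
      intro i hi
      exact Real.rpow_pos_of_pos (hApos i hi) _
    have key : ∑ x ∈ t, ∏ i ∈ s, f i x ≤ ∏ i ∈ s, A i ^ ((1:ℝ)/m) := by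
      have step : ∀ x ∈ t, ∏ i ∈ s, f i x ≤
          (∏ i ∈ s, A i ^ ((1:ℝ)/m)) * ∑ i ∈ s, (1/m) * (f i x ^ m / A i) := by
        intro x hx
        have amgm := Real.geom_mean_le_arith_mean_weighted s (fun _ => (1:ℝ)/m)
          (fun i => f i x ^ m / A i)
          (fun i _ => by positivity)
          (by rw [Finset.sum_const, ← hm, nsmul_eq_mul]; field_simp)
          (fun i hi => div_nonneg (pow_nonneg (hf i hi x hx) m) (hAnn i hi))
        have heq : ∀ i ∈ s, (f i x ^ m / A i) ^ ((1:ℝ)/m) = f i x / A i ^ ((1:ℝ)/m) := by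
          intro i hi
          rw [Real.div_rpow (pow_nonneg (hf i hi x hx) m) (hAnn i hi)]
          congr 1
          rw [← Real.rpow_natCast (f i x) m, ← Real.rpow_mul (hf i hi x hx)]
          rw [mul_one_div, div_self (ne_of_gt hmR), Real.rpow_one]
        rw [Finset.prod_congr rfl heq] at amgm
        rw [Finset.prod_div_distrib] at amgm
        rw [div_le_iff₀ hPpos] at amgm
        linarith [amgm]
      calc ∑ x ∈ t, ∏ i ∈ s, f i x
          ≤ ∑ x ∈ t, ((∏ i ∈ s, A i ^ ((1:ℝ)/m)) * ∑ i ∈ s, (1/m) * (f i x ^ m / A i)) :=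
            Finset.sum_le_sum step
        _ = (∏ i ∈ s, A i ^ ((1:ℝ)/m)) * ∑ i ∈ s, (1/m) * (A i / A i) := by
            rw [← Finset.mul_sum]
            congr 1
            rw [Finset.sum_comm]
            apply Finset.sum_congr rfl
            intro i hi
            rw [← Finset.mul_sum, ← Finset.sum_div]
        _ ≤ (∏ i ∈ s, A i ^ ((1:ℝ)/m)) * 1 := by
            apply mul_le_mul_of_nonneg_left _ (le_of_lt hPpos)
            have : ∀ i ∈ s, (1/(m:ℝ)) * (A i / A i) = 1/m := by
              intro i hi
              rw [div_self (ne_of_gt (hApos i hi)), mul_one]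
            rw [Finset.sum_congr rfl this, Finset.sum_const]
            rw [nsmul_eq_mul]
            rw [← hm]
            field_simp
            exact le_refl _
        _ = ∏ i ∈ s, A i ^ ((1:ℝ)/m) := mul_one _
    calc (∑ x ∈ t, ∏ i ∈ s, f i x) ^ m
        ≤ (∏ i ∈ s, A i ^ ((1:ℝ)/m)) ^ m := by
          apply pow_le_pow_left₀ _ key
          exact Finset.sum_nonneg fun x hx => Finset.prod_nonneg fun i hi => hf i hi x hx
      _ = ∏ i ∈ s, A i := by
          rw [← Finset.prod_pow]
          apply Finset.prod_congr rfl
          intro i hi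
          rw [← Real.rpow_natCast (A i ^ ((1:ℝ)/m)) m, ← Real.rpow_mul (hAnn i hi)]
          rw [one_div, inv_mul_cancel₀ (ne_of_gt hmR), Real.rpow_one]

theorem loomis_whitney {ι : Type*} [DecidableEq ι] [DecidableEq (ι → ℤ)]
    (s : Finset ι) (Y : Finset (ι → ℤ))
    (hsupp : ∀ y ∈ Y, ∀ j, j ∉ s → y j = 0) (hne : Y.Nonempty) :
    Y.card ^ s.card ≤ Y.card * ∏ i ∈ s, (Y.image fun y => Function.update y i 0).card := by
  induction s using Finset.induction_on generalizing Y with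
  | empty => simpa using hne.card_pos
  | @insert i₀ s' hi₀ IH =>
    classical
    set n := s'.card with hn
    set m := n + 1 with hmdef
    have hcard : (insert i₀ s').card = m := by rw [card_insert_of_notMem hi₀]
    -- fibers over the i₀ coordinate
    set T : Finset ℤ := Y.image (fun y => y i₀) with hT
    set Yx : ℤ → Finset (ι → ℤ) := fun x => Y.filter (fun y => y i₀ = x) with hYx
    set c : ℤ → ℕ := fun x => (Yx x).card with hc
    have hsumc : ∑ x ∈ T, c x = Y.card :=
      (Finset.card_eq_sum_card_fiberwise (fun y hy => Finset.mem_image_of_mem _ hy)).symm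
    set Z : ℤ → Finset (ι → ℤ) := fun x => (Yx x).image (fun y => Function.update y i₀ 0)
      with hZ
    have hZcard : ∀ x, (Z x).card = c x := by
      intro x
      apply Finset.card_image_of_injOn
      intro y hy y' hy' h
      simp only [Finset.mem_coe, hYx, Finset.mem_filter] at hy hy'
      funext j
      by_cases hj : j = i₀
      · subst hj; rw [hy.2, hy'.2]
      · have h2 := congrFun h j
        simp only [Function.update_of_ne hj] at h2
        exact h2
    -- projections of Y
    set P : ι → ℕ := fun i => (Y.image fun y => Function.update y i 0).card with hP
    set b : ι → ℤ → ℕ := fun i x =>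
      ((Y.image fun y => Function.update y i 0).filter (fun z => z i₀ = x)).card with hb
    have hsumb : ∀ i ∈ s', ∑ x ∈ T, b i x = P i := by
      intro i hi
      have hine : i ≠ i₀ := fun h => hi₀ (h ▸ hi)
      have hmap : ∀ z ∈ Y.image (fun y => Function.update y i 0), (fun z : ι → ℤ => z i₀) z ∈ T := by
        intro z hz
        obtain ⟨y, hy, rfl⟩ := Finset.mem_image.1 hz
        simp only [Function.update_of_ne (Ne.symm hine)]
        exact Finset.mem_image_of_mem _ hy
      exact (Finset.card_eq_sum_card_fiberwise hmap).symm
    -- slice projections are bounded by fibers of projections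
    have hZproj : ∀ i ∈ s', ∀ x, ((Z x).image fun y => Function.update y i 0).card ≤ b i x := by
      intro i hi x
      have hine : i ≠ i₀ := fun h => hi₀ (h ▸ hi)
      have hsub : ((Z x).image fun y => Function.update y i 0) ⊆
          (((Y.image fun y => Function.update y i 0).filter (fun z => z i₀ = x)).image
            (fun z => Function.update z i₀ 0)) := by
        intro w hw
        simp only [hZ, Finset.image_image, Finset.mem_image, Function.comp] at hw
        obtain ⟨y, hy, rfl⟩ := hw
        simp only [hYx, Finset.mem_filter] at hy
        apply Finset.mem_image.2
        refine ⟨Function.update y i 0, ?_, ?_⟩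
        · exact Finset.mem_filter.2 ⟨Finset.mem_image_of_mem _ hy.1,
            by rw [Function.update_of_ne (Ne.symm hine)]; exact hy.2⟩
        · rw [Function.update_comm hine]
      exact le_trans (Finset.card_le_card hsub) (Finset.card_image_le)
    -- slices fit inside the i₀-projection
    have hcC : ∀ x ∈ T, c x ≤ P i₀ := by
      intro x hx
      rw [← hZcard]
      apply Finset.card_le_card
      intro w hw
      simp only [hZ, Finset.mem_image, hYx, Finset.mem_filter] at hw
      obtain ⟨y, hy, rfl⟩ := hw
      exact Finset.mem_image_of_mem _ hy.1
    -- apply IH to each slice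
    have hslice : ∀ x ∈ T, c x ^ m ≤ P i₀ * (c x * ∏ i ∈ s', b i x) := by
      intro x hx
      have hZne : (Z x).Nonempty := by
        obtain ⟨y, hy, hyx⟩ := Finset.mem_image.1 hx
        exact ⟨Function.update y i₀ 0, Finset.mem_image_of_mem _
          (Finset.mem_filter.2 ⟨hy, hyx⟩)⟩
      have hZsupp : ∀ z ∈ Z x, ∀ j, j ∉ s' → z j = 0 := by
        intro z hz j hj
        obtain ⟨y, hy, rfl⟩ := Finset.mem_image.1 hz
        by_cases hji : j = i₀
        · subst hji; rw [Function.update_self]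
        · rw [Function.update_of_ne hji]
          exact hsupp y (Finset.mem_filter.1 hy).1 j (by simp [hji, hj])
      have h1 := IH (Z x) hZsupp hZne
      rw [hZcard] at h1
      have h2 : c x ^ n ≤ c x * ∏ i ∈ s', b i x :=
        le_trans h1 (Nat.mul_le_mul_left _ (Finset.prod_le_prod'
          (fun i hi => hZproj i hi x)))
      calc c x ^ m = c x ^ n * c x := by rw [hmdef, pow_succ]
        _ ≤ (c x * ∏ i ∈ s', b i x) * P i₀ := Nat.mul_le_mul h2 (hcC x hx)
        _ = P i₀ * (c x * ∏ i ∈ s', b i x) := by ring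
    -- now the real-number Hölder argument
    rw [hcard]
    have hmR : (0:ℝ) < m := by positivity
    set g : ι → ℤ → ℝ := fun i x => if i = i₀ then (c x : ℝ) else (b i x : ℝ) with hg
    have hgnn : ∀ i ∈ insert i₀ s', ∀ x ∈ T, 0 ≤ g i x := by
      intro i _ x _; by_cases h : i = i₀ <;> simp [hg, h]
    set f : ι → ℤ → ℝ := fun i x => g i x ^ ((1:ℝ)/m) with hf
    have hfnn : ∀ i ∈ insert i₀ s', ∀ x ∈ T, 0 ≤ f i x := by
      intro i hi x hx; exact Real.rpow_nonneg (hgnn i hi x hx) _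
    have hfpow : ∀ i ∈ insert i₀ s', ∀ x ∈ T, f i x ^ m = g i x := by
      intro i hi x hx
      rw [hf, ← Real.rpow_natCast (g i x ^ ((1:ℝ)/m)) m, ← Real.rpow_mul (hgnn i hi x hx),
        one_div, inv_mul_cancel₀ (ne_of_gt hmR), Real.rpow_one]
    have hprodg : ∀ x, ∏ i ∈ insert i₀ s', g i x = (c x : ℝ) * ∏ i ∈ s', (b i x : ℝ) := by
      intro x
      rw [Finset.prod_insert hi₀]
      congr 1
      · simp [hg]
      · apply Finset.prod_congr rfl
        intro i hi
        have hine : i ≠ i₀ := fun h => hi₀ (h ▸ hi)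
        simp only [hg, if_neg hine]
    -- pointwise: c x ≤ P i₀ ^ (1/m) * ∏ f i x
    have hpoint : ∀ x ∈ T, (c x : ℝ) ≤ (P i₀ : ℝ) ^ ((1:ℝ)/m) * ∏ i ∈ insert i₀ s', f i x := by
      intro x hx
      have h1 : ((c x : ℝ)) ^ (m:ℕ) ≤ (P i₀ : ℝ) * ∏ i ∈ insert i₀ s', g i x := by
        rw [hprodg]
        have := hslice x hx
        calc ((c x : ℝ)) ^ (m:ℕ) = ((c x ^ m : ℕ) : ℝ) := by push_cast; ring
          _ ≤ ((P i₀ * (c x * ∏ i ∈ s', b i x) : ℕ) : ℝ) := by exact_mod_cast this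
          _ = (P i₀ : ℝ) * ((c x : ℝ) * ∏ i ∈ s', (b i x : ℝ)) := by push_cast; ring
      have h2 : (c x : ℝ) ≤ ((P i₀ : ℝ) * ∏ i ∈ insert i₀ s', g i x) ^ ((1:ℝ)/m) := by
        have := Real.rpow_le_rpow (by positivity) h1 (le_of_lt (by positivity : (0:ℝ) < 1/m))
        rwa [← Real.rpow_natCast (c x : ℝ) m, ← Real.rpow_mul (by positivity),
          mul_one_div, div_self (ne_of_gt hmR), Real.rpow_one] at this
      refine le_trans h2 (le_of_eq ?_)
      rw [Real.mul_rpow (by positivity) (Finset.prod_nonneg (fun i hi => hgnn i hi x hx))]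
      congr 1
      rw [← Real.finset_prod_rpow _ _ (fun i hi => hgnn i hi x hx)]
    -- sum and apply Hölder
    have hsum : (Y.card : ℝ) ≤ (P i₀ : ℝ) ^ ((1:ℝ)/m) *
        ∑ x ∈ T, ∏ i ∈ insert i₀ s', f i x := by
      rw [← hsumc, Nat.cast_sum, Finset.mul_sum]
      exact Finset.sum_le_sum hpoint
    have hhold := holder_pow (insert i₀ s') T f hfnn
    rw [hcard] at hhold
    have hRHS : ∏ i ∈ insert i₀ s', ∑ x ∈ T, f i x ^ m =
        (Y.card : ℝ) * ∏ i ∈ s', (P i : ℝ) := by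
      have : ∀ i ∈ insert i₀ s', ∑ x ∈ T, f i x ^ m = ∑ x ∈ T, g i x :=
        fun i hi => Finset.sum_congr rfl (fun x hx => hfpow i hi x hx)
      rw [Finset.prod_congr rfl this, Finset.prod_insert hi₀]
      congr 1
      · simp only [hg, if_pos rfl]
        rw [← hsumc]; push_cast; ring
      · apply Finset.prod_congr rfl
        intro i hi
        have hine : i ≠ i₀ := fun h => hi₀ (h ▸ hi)
        simp only [hg, if_neg hine]
        rw [← hsumb i hi]; push_cast; ring
    -- conclude over ℝ
    have hSnn : 0 ≤ ∑ x ∈ T, ∏ i ∈ insert i₀ s', f i x :=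
      Finset.sum_nonneg fun x hx => Finset.prod_nonneg fun i hi => hfnn i hi x hx
    have hPn : (0:ℝ) ≤ (P i₀ : ℝ) := Nat.cast_nonneg _
    have hPow : ((P i₀ : ℝ) ^ ((1:ℝ)/m)) ^ (m:ℕ) = (P i₀ : ℝ) := by
      rw [← Real.rpow_natCast ((P i₀:ℝ) ^ ((1:ℝ)/m)) m, ← Real.rpow_mul hPn, one_div,
        inv_mul_cancel₀ (ne_of_gt hmR), Real.rpow_one]
    have hfinal : (Y.card : ℝ) ^ (m:ℕ) ≤ (Y.card : ℝ) * ∏ i ∈ insert i₀ s', (P i : ℝ) := by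
      calc (Y.card : ℝ) ^ (m:ℕ)
          ≤ ((P i₀ : ℝ) ^ ((1:ℝ)/m) * ∑ x ∈ T, ∏ i ∈ insert i₀ s', f i x) ^ (m:ℕ) :=
            pow_le_pow_left₀ (Nat.cast_nonneg _) hsum m
        _ = ((P i₀ : ℝ) ^ ((1:ℝ)/m)) ^ (m:ℕ) * (∑ x ∈ T, ∏ i ∈ insert i₀ s', f i x) ^ (m:ℕ) :=
            mul_pow _ _ _
        _ ≤ (P i₀ : ℝ) * (∏ i ∈ insert i₀ s', ∑ x ∈ T, f i x ^ m) :=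
            mul_le_mul (le_of_eq hPow) hhold (pow_nonneg hSnn m) hPn
        _ = (P i₀ : ℝ) * ((Y.card : ℝ) * ∏ i ∈ s', (P i : ℝ)) := by rw [hRHS]
        _ = (Y.card : ℝ) * ∏ i ∈ insert i₀ s', (P i : ℝ) := by
            rw [Finset.prod_insert hi₀]; ring
    have : ((Y.card ^ m : ℕ) : ℝ) ≤ ((Y.card * ∏ i ∈ insert i₀ s', P i : ℕ) : ℝ) := by
      push_cast
      exact hfinal
    exact_mod_cast this

lemma update_add_single (d : ℕ) (w : Fin d → ℤ) (i : Fin d) :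
    Function.update (w + Pi.single i 1) i 0 = Function.update w i 0 := by
  funext j
  by_cases hj : j = i
  · subst hj; simp
  · simp [Function.update_of_ne hj, Pi.single_eq_of_ne hj]

lemma update_sub_single (d : ℕ) (w : Fin d → ℤ) (i : Fin d) :
    Function.update (w - Pi.single i 1) i 0 = Function.update w i 0 := by
  funext j
  by_cases hj : j = i
  · subst hj; simp
  · simp [Function.update_of_ne hj, Pi.single_eq_of_ne hj]

lemma proj_le_plus (d : ℕ) (Y : Finset (Fin d → ℤ)) (i : Fin d) :
    (Y.image fun y => Function.update y i 0).card ≤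
      (Y.filter fun y => y + Pi.single i 1 ∉ Y).card := by
  classical
  have hsub : (Y.image fun y => Function.update y i 0) ⊆
      ((Y.filter fun y => y + Pi.single i 1 ∉ Y).image fun y => Function.update y i 0) := by
    intro z hz
    obtain ⟨y, hy, rfl⟩ := Finset.mem_image.1 hz
    set F : Finset (Fin d → ℤ) :=
      Y.filter (fun w => Function.update w i 0 = Function.update y i 0) with hF
    have hFne : F.Nonempty := ⟨y, Finset.mem_filter.2 ⟨hy, rfl⟩⟩
    have hIne : (F.image fun w => w i).Nonempty := hFne.image _
    set M := (F.image fun w => w i).max' hIne with hM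
    obtain ⟨w, hwF, hwM⟩ := Finset.mem_image.1 ((F.image fun w => w i).max'_mem hIne)
    have hwY : w ∈ Y := (Finset.mem_filter.1 hwF).1
    have hwz : Function.update w i 0 = Function.update y i 0 := (Finset.mem_filter.1 hwF).2
    have hnot : w + Pi.single i 1 ∉ Y := by
      intro hmem
      have hmemF : w + Pi.single i 1 ∈ F := by
        refine Finset.mem_filter.2 ⟨hmem, ?_⟩
        rw [update_add_single, hwz]
      have hle := Finset.le_max' _ _ (Finset.mem_image_of_mem (fun w => w i) hmemF)
      simp only [Pi.add_apply, Pi.single_eq_same] at hle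
      linarith [hwM]
    exact Finset.mem_image.2 ⟨w, Finset.mem_filter.2 ⟨hwY, hnot⟩, hwz⟩
  exact le_trans (Finset.card_le_card hsub) Finset.card_image_le

lemma proj_le_minus (d : ℕ) (Y : Finset (Fin d → ℤ)) (i : Fin d) :
    (Y.image fun y => Function.update y i 0).card ≤
      (Y.filter fun y => y - Pi.single i 1 ∉ Y).card := by
  classical
  have hsub : (Y.image fun y => Function.update y i 0) ⊆
      ((Y.filter fun y => y - Pi.single i 1 ∉ Y).image fun y => Function.update y i 0) := by
    intro z hz
    obtain ⟨y, hy, rfl⟩ := Finset.mem_image.1 hz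
    set F : Finset (Fin d → ℤ) :=
      Y.filter (fun w => Function.update w i 0 = Function.update y i 0) with hF
    have hFne : F.Nonempty := ⟨y, Finset.mem_filter.2 ⟨hy, rfl⟩⟩
    have hIne : (F.image fun w => w i).Nonempty := hFne.image _
    set M := (F.image fun w => w i).min' hIne with hM
    obtain ⟨w, hwF, hwM⟩ := Finset.mem_image.1 ((F.image fun w => w i).min'_mem hIne)
    have hwY : w ∈ Y := (Finset.mem_filter.1 hwF).1
    have hwz : Function.update w i 0 = Function.update y i 0 := (Finset.mem_filter.1 hwF).2
    have hnot : w - Pi.single i 1 ∉ Y := by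
      intro hmem
      have hmemF : w - Pi.single i 1 ∈ F := by
        refine Finset.mem_filter.2 ⟨hmem, ?_⟩
        rw [update_sub_single, hwz]
      have hle := Finset.min'_le _ _ (Finset.mem_image_of_mem (fun w => w i) hmemF)
      simp only [Pi.sub_apply, Pi.single_eq_same] at hle
      linarith [hwM]
    exact Finset.mem_image.2 ⟨w, Finset.mem_filter.2 ⟨hwY, hnot⟩, hwz⟩
  exact le_trans (Finset.card_le_card hsub) Finset.card_image_le

/-- Sharp discrete Wulff bound for the axis stencil:
`Per_{S_ax,1}(Y) ≥ 2d · |Y|^{(d-1)/d}` for every finite nonempty `Y ⊂ ℤ^d`. -/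
theorem axisPer_ge_wulff (d : ℕ) (Y : Finset (Fin d → ℤ)) (hY : Y.Nonempty) :
    (2 * d : ℝ) * (Y.card : ℝ) ^ (((d : ℝ) - 1) / d) ≤ (axisPer d Y : ℝ) := by
  classical
  rcases Nat.eq_zero_or_pos d with hd0 | hd
  · subst hd0; simp
  set P : Fin d → ℕ := fun i => (Y.image fun y => Function.update y i 0).card with hP
  have hPpos : ∀ i, 0 < P i := fun i => Finset.card_pos.2 (hY.image _)
  -- Loomis-Whitney
  have hLW : Y.card ^ d ≤ Y.card * ∏ i, P i := by
    have := loomis_whitney (Finset.univ : Finset (Fin d)) Y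
      (fun y _ j hj => absurd (Finset.mem_univ j) hj) hY
    simpa using this
  have hLW' : Y.card ^ (d - 1) ≤ ∏ i, P i := by
    have hYpos : 0 < Y.card := hY.card_pos
    have : Y.card * Y.card ^ (d - 1) ≤ Y.card * ∏ i, P i := by
      calc Y.card * Y.card ^ (d - 1) = Y.card ^ d := by
            rw [← pow_succ']; congr 1; omega
        _ ≤ Y.card * ∏ i, P i := hLW
    exact Nat.le_of_mul_le_mul_left this hYpos
  -- perimeter bound
  have hPer : 2 * ∑ i, P i ≤ axisPer d Y := by
    rw [axisPer]
    calc (2:ℕ) * ∑ i, P i = ∑ i, (P i + P i) := by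
          rw [Finset.mul_sum]; exact Finset.sum_congr rfl fun i _ => by ring
      _ ≤ _ := Finset.sum_le_sum fun i _ => Nat.add_le_add (proj_le_plus d Y i) (proj_le_minus d Y i)
  -- real arithmetic
  have hdR : (0:ℝ) < d := by exact_mod_cast hd
  have hcast : ((d:ℝ) - 1) = ((d - 1 : ℕ) : ℝ) := by
    rw [Nat.cast_sub hd]; norm_num
  have hgm : (d:ℝ) * (∏ i, (P i : ℝ)) ^ ((1:ℝ)/d) ≤ ∑ i, (P i : ℝ) := by
    have amgm := Real.geom_mean_le_arith_mean_weighted Finset.univ (fun _ : Fin d => (1:ℝ)/d)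
      (fun i => (P i : ℝ)) (fun i _ => by positivity)
      (by simp [Finset.sum_const, Finset.card_univ]; field_simp)
      (fun i _ => by positivity)
    have h1 : ∏ i, ((P i : ℝ)) ^ ((1:ℝ)/d) = (∏ i, (P i : ℝ)) ^ ((1:ℝ)/d) :=
      Real.finset_prod_rpow _ _ (fun i _ => by positivity) _
    rw [h1] at amgm
    have h2 : ∑ i, ((1:ℝ)/d) * (P i : ℝ) = (1/d) * ∑ i, (P i : ℝ) := by
      rw [Finset.mul_sum]
    rw [h2] at amgm
    calc (d:ℝ) * (∏ i, (P i : ℝ)) ^ ((1:ℝ)/d) ≤ (d:ℝ) * ((1/d) * ∑ i, (P i : ℝ)) :=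
          mul_le_mul_of_nonneg_left amgm (le_of_lt hdR)
      _ = ∑ i, (P i : ℝ) := by field_simp
  have hmono : (Y.card : ℝ) ^ (((d:ℝ) - 1) / d) ≤ (∏ i, (P i : ℝ)) ^ ((1:ℝ)/d) := by
    have hle : ((Y.card ^ (d-1) : ℕ) : ℝ) ≤ ((∏ i, P i : ℕ) : ℝ) := by exact_mod_cast hLW'
    have := Real.rpow_le_rpow (by positivity) hle (by positivity : (0:ℝ) ≤ 1/d)
    push_cast at this
    rwa [← Real.rpow_natCast (Y.card : ℝ) (d-1), ← Real.rpow_mul (by positivity),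
      ← hcast, mul_one_div] at this
  calc (2 * d : ℝ) * (Y.card : ℝ) ^ (((d : ℝ) - 1) / d)
      ≤ (2 * d : ℝ) * (∏ i, (P i : ℝ)) ^ ((1:ℝ)/d) := by
        apply mul_le_mul_of_nonneg_left hmono (by positivity)
    _ = 2 * ((d:ℝ) * (∏ i, (P i : ℝ)) ^ ((1:ℝ)/d)) := by ring
    _ ≤ 2 * ∑ i, (P i : ℝ) := by linarith [hgm]
    _ ≤ (axisPer d Y : ℝ) := by exact_mod_cast hPer
end

section
/- (Interval symmetric difference, exact formula) Let α, β ∈ N, t ∈ Z, and set I = [0,α) ∩ Z, J = [t, t+β) ∩ Z, m = min{α,β}, δ = |α−β|, and d(t) = (t − (α−β)_+)_+ + (−t − (β−α)_+)_+, where x_+ = max{0,x}. Then #(I Δ J) = δ + 2·min{d(t), m}. -/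
open Finset

lemma card_symmDiff_aux (s t : Finset ℤ) :
    (symmDiff s t).card + 2 * (s ∩ t).card = s.card + t.card := by
  rw [symmDiff_def, sup_eq_union,
    card_union_of_disjoint (disjoint_sdiff_sdiff)]
  have h1 := Finset.card_inter_add_card_sdiff s t
  have h2 := Finset.card_inter_add_card_sdiff t s
  rw [Finset.inter_comm t s] at h2
  omega

/-- Exact formula for the cardinality of the symmetric difference of two half-open
integer intervals `I = [0,α) ∩ ℤ` and `J = [t,t+β) ∩ ℤ`:
`#(I Δ J) = δ + 2·min{d(t), m}` where `m = min{α,β}`, `δ = |α−β|` and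
`d(t) = (t − (α−β)₊)₊ + (−t − (β−α)₊)₊`. -/
theorem card_symmDiff_Ico (α β : ℕ) (t : ℤ) :
    ((symmDiff (Finset.Ico (0 : ℤ) (α : ℤ)) (Finset.Ico t (t + (β : ℤ)))).card : ℤ)
      = |(α : ℤ) - (β : ℤ)| +
        2 * min (max (t - max ((α : ℤ) - β) 0) 0 + max (-t - max ((β : ℤ) - α) 0) 0)
            (min (α : ℤ) (β : ℤ)) := by
  have key := card_symmDiff_aux (Finset.Ico (0 : ℤ) (α : ℤ)) (Finset.Ico t (t + (β : ℤ)))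
  rw [Finset.Ico_inter_Ico] at key
  rw [Int.card_Ico, Int.card_Ico, Int.card_Ico] at key
  rw [abs_eq_max_neg]
  omega
end

section
/- (Tempered F{\o}lner implies bounded profile ratio) Let Γ be an infinite group with finite symmetric generating set S, Δ := |S|. Suppose (F_n) is a sequence of finite subsets with |F_n| → ∞ and constants A, B ≥ 1 such that (i) |∂_S F_n| ≤ A·I^incr(|F_n|) for all n, and (ii) |F_{n+1} \ F_n| ≤ B·|∂_S F_n| with F_n ⊆ F_{n+1}, where I^incr(r) := inf_{s ≥ r} I°(r') for the exact vertex profile I°. Then for all r ≥ |F_1|, I°(r) ≤ (A + Δ·A·B)·I^incr(r). -/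
open Finset

variable {G : Type*} [Group G] [DecidableEq G]

/-- The outer vertex boundary `∂_S Y = SY \ Y`. -/
def vertexBoundary (S Y : Finset G) : Finset G :=
  ((Y ×ˢ S).image fun p => p.1 * p.2) \ Y

/-- The exact vertex isoperimetric profile `I°(r) = inf{|∂_S Y| : |Y| = r}`. -/
noncomputable def exactProfile (S : Finset G) (r : ℕ) : ℕ :=
  sInf {n | ∃ Y : Finset G, Y.card = r ∧ (vertexBoundary S Y).card = n}

/-- The increasing minorant `I^incr(r) = inf_{s ≥ r} I°(s) = inf{|∂_S Y| : |Y| ≥ r}`. -/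
noncomputable def incrProfile (S : Finset G) (r : ℕ) : ℕ :=
  sInf {n | ∃ Y : Finset G, r ≤ Y.card ∧ (vertexBoundary S Y).card = n}

lemma incrProfile_set_nonempty [Infinite G] (S : Finset G) (r : ℕ) :
    {n | ∃ Y : Finset G, r ≤ Y.card ∧ (vertexBoundary S Y).card = n}.Nonempty := by
  obtain ⟨Y, hY⟩ := Infinite.exists_subset_card_eq G r
  exact ⟨(vertexBoundary S Y).card, Y, hY.ge, rfl⟩

lemma incrProfile_mono [Infinite G] (S : Finset G) {a b : ℕ} (h : a ≤ b) :
    incrProfile S a ≤ incrProfile S b := by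
  obtain ⟨Y, hY, hc⟩ := Nat.sInf_mem (incrProfile_set_nonempty S b)
  exact Nat.sInf_le ⟨Y, h.trans hY, hc⟩

lemma exactProfile_le [Infinite G] (S Y : Finset G) :
    exactProfile S Y.card ≤ (vertexBoundary S Y).card :=
  Nat.sInf_le ⟨Y, rfl, rfl⟩

lemma vertexBoundary_pad (S F E : Finset G) :
    (vertexBoundary S (F ∪ E)).card ≤ (vertexBoundary S F).card + E.card * S.card := by
  have hsub : vertexBoundary S (F ∪ E) ⊆
      vertexBoundary S F ∪ (E ×ˢ S).image (fun p => p.1 * p.2) := by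
    intro x hx
    simp only [vertexBoundary, mem_sdiff, mem_union, mem_image] at hx ⊢
    obtain ⟨⟨p, hp, hpx⟩, hxn⟩ := hx
    rw [mem_product, mem_union] at hp
    rcases hp.1 with h1 | h1
    · exact Or.inl ⟨⟨p, by simp [mem_product, h1, hp.2], hpx⟩, fun h => hxn (Or.inl h)⟩
    · exact Or.inr ⟨p, by simp [mem_product, h1, hp.2], hpx⟩
  calc (vertexBoundary S (F ∪ E)).card
      ≤ (vertexBoundary S F ∪ (E ×ˢ S).image (fun p => p.1 * p.2)).card :=
        card_le_card hsub
    _ ≤ (vertexBoundary S F).card + ((E ×ˢ S).image (fun p => p.1 * p.2)).card :=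
        card_union_le _ _
    _ ≤ (vertexBoundary S F).card + E.card * S.card := by
        have := card_image_le (s := E ×ˢ S) (f := fun p => p.1 * p.2)
        rw [card_product] at this
        omega

/-- Tempered F{\o}lner implies bounded profile ratio: if a nested sequence `(F_n)` with
`|F_n| → ∞` satisfies (i) `|∂_S F_n| ≤ A·I^incr(|F_n|)` and
(ii) `|F_{n+1} \ F_n| ≤ B·|∂_S F_n|` for constants `A, B ≥ 1`, then for all `r ≥ |F_0|`,
`I°(r) ≤ (A + Δ·A·B)·I^incr(r)`, where `Δ = |S|`. -/
theorem tempered_folner_bounded_ratio [Infinite G]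
    (S : Finset G) (hsym : ∀ s ∈ S, s⁻¹ ∈ S) (hone : (1 : G) ∉ S)
    (F : ℕ → Finset G) (hnested : ∀ n, F n ⊆ F (n + 1))
    (hgrow : Filter.Tendsto (fun n => (F n).card) Filter.atTop Filter.atTop)
    (A B : ℝ) (hA : 1 ≤ A) (hB : 1 ≤ B)
    (hTFi : ∀ n, ((vertexBoundary S (F n)).card : ℝ) ≤ A * (incrProfile S (F n).card : ℝ))
    (hTFii : ∀ n, (((F (n + 1)) \ (F n)).card : ℝ) ≤ B * ((vertexBoundary S (F n)).card : ℝ))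
    (r : ℕ) (hr : (F 0).card ≤ r) :
    (exactProfile S r : ℝ) ≤ (A + (S.card : ℝ) * A * B) * (incrProfile S r : ℝ) := by
  have hinc : (0:ℝ) ≤ (incrProfile S r : ℝ) := Nat.cast_nonneg _
  have hApos : (0:ℝ) ≤ A := le_trans zero_le_one hA
  have hBpos : (0:ℝ) ≤ B := le_trans zero_le_one hB
  -- minimal n with r ≤ |F n|
  have hex : ∃ n, r ≤ (F n).card := by
    rcases (Filter.tendsto_atTop.mp hgrow r).exists with ⟨n, hn⟩
    exact ⟨n, hn⟩
  set n := Nat.find hex with hn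
  have hspec : r ≤ (F n).card := Nat.find_spec hex
  cases' hn' : n with m
  · -- n = 0 : r = |F 0|
    have hreq : r = (F 0).card := le_antisymm (hn' ▸ hspec) hr
    have h1 : exactProfile S r ≤ (vertexBoundary S (F 0)).card := by
      rw [hreq]; exact exactProfile_le S (F 0)
    calc (exactProfile S r : ℝ) ≤ ((vertexBoundary S (F 0)).card : ℝ) := by exact_mod_cast h1
      _ ≤ A * (incrProfile S (F 0).card : ℝ) := hTFi 0
      _ = A * (incrProfile S r : ℝ) := by rw [hreq]
      _ ≤ (A + (S.card : ℝ) * A * B) * (incrProfile S r : ℝ) := by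
          apply mul_le_mul_of_nonneg_right _ hinc
          have : 0 ≤ (S.card : ℝ) * A * B := by positivity
          linarith
  · -- n = m+1 : |F m| < r ≤ |F (m+1)|
    have hlt : (F m).card < r := by
      have := Nat.find_min hex (m := m) (by omega)
      omega
    have hge : r ≤ (F (m+1)).card := hn' ▸ hspec
    -- pick E ⊆ F(m+1) \ F m with |E| = r - |F m|
    have hcard : r - (F m).card ≤ (F (m+1) \ F m).card := by
      rw [card_sdiff_of_subset (hnested m)]; omega
    obtain ⟨E, hEsub, hEcard⟩ := exists_subset_card_eq hcard
    have hdisj : Disjoint (F m) E := by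
      refine disjoint_left.mpr fun x hx hxE => ?_
      exact (mem_sdiff.mp (hEsub hxE)).2 hx
    have hYcard : (F m ∪ E).card = r := by
      rw [card_union_of_disjoint hdisj, hEcard]; omega
    have h1 : exactProfile S r ≤ (vertexBoundary S (F m ∪ E)).card := by
      have := exactProfile_le S (F m ∪ E); rwa [hYcard] at this
    have h2 : (vertexBoundary S (F m ∪ E)).card
        ≤ (vertexBoundary S (F m)).card + E.card * S.card := vertexBoundary_pad S (F m) E
    have hmono : (incrProfile S (F m).card : ℝ) ≤ (incrProfile S r : ℝ) := by
      exact_mod_cast incrProfile_mono S hlt.le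
    have hE2 : (E.card : ℝ) ≤ B * ((vertexBoundary S (F m)).card : ℝ) := by
      refine le_trans ?_ (hTFii m)
      exact_mod_cast card_le_card hEsub
    calc (exactProfile S r : ℝ)
        ≤ ((vertexBoundary S (F m)).card : ℝ) + (E.card : ℝ) * (S.card : ℝ) := by
          have : (exactProfile S r : ℝ) ≤
              ((vertexBoundary S (F m)).card + E.card * S.card : ℕ) := by
            exact_mod_cast le_trans h1 h2
          push_cast at this; linarith
      _ ≤ ((vertexBoundary S (F m)).card : ℝ)
            + (S.card : ℝ) * B * ((vertexBoundary S (F m)).card : ℝ) := by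
          nlinarith [Nat.cast_nonneg (α := ℝ) S.card]
      _ = (1 + (S.card : ℝ) * B) * ((vertexBoundary S (F m)).card : ℝ) := by ring
      _ ≤ (1 + (S.card : ℝ) * B) * (A * (incrProfile S (F m).card : ℝ)) := by
          apply mul_le_mul_of_nonneg_left (hTFi m)
          nlinarith [Nat.cast_nonneg (α := ℝ) S.card]
      _ ≤ (1 + (S.card : ℝ) * B) * (A * (incrProfile S r : ℝ)) := by
          apply mul_le_mul_of_nonneg_left _ (by nlinarith [Nat.cast_nonneg (α := ℝ) S.card])
          exact mul_le_mul_of_nonneg_left hmono hApos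
      _ = (A + (S.card : ℝ) * A * B) * (incrProfile S r : ℝ) := by ring
end
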